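/- Let χ ∈ {−1,+1}ⁿ and let W₁, …, Wₜ be matrices where each Wᵢ is either the identity on the relevant coordinates or an averaging matrix W_{u,v} (replacing coordinates u and v by their average), and suppose exactly c of the edges (u,v) are 'cross edges', i.e., satisfy χ(u) ≠ χ(v). Then ‖Wₜ⋯W₁χ − χ‖² ≤ 4c. -/

import Mathlib

/-!
Averaging along an internal edge does not change `χ ⬝ᵥ x`, and averaging along a cross edge lowers
it by at most `|χ u - χ v| * |x u - x v| / 2 ≤ 2`, since every iterate stays in `[-1, 1]ⁿ`. Hence
`χ ⬝ᵥ x t ≥ n - 2c`, and `‖x t - χ‖² = ‖x t‖² - 2 χ ⬝ᵥ x t + n ≤ 2 (n - χ ⬝ᵥ x t) ≤ 4c`.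
-/

open Matrix Finset

/-- The matrix that replaces coordinates `u` and `v` of a vector by their average:
`W_{u,v} = I − (1/2)(e_u − e_v)(e_u − e_v)ᵀ`. -/
noncomputable def avgMatrix {n : ℕ} (u v : Fin n) : Matrix (Fin n) (Fin n) ℝ :=
  1 - (2 : ℝ)⁻¹ • vecMulVec (Pi.single u 1 - Pi.single v 1) (Pi.single u 1 - Pi.single v 1)

section avgMatrix

variable {n : ℕ} (u v : Fin n)

theorem dotProduct_single_sub_single (y : Fin n → ℝ) :
    (Pi.single u 1 - Pi.single v 1) ⬝ᵥ y = y u - y v := by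
  simp [sub_dotProduct]

theorem avgMatrix_mulVec (y : Fin n → ℝ) :
    avgMatrix u v *ᵥ y = y - (2⁻¹ * (y u - y v)) • (Pi.single u 1 - Pi.single v 1) := by
  rw [avgMatrix, sub_mulVec, one_mulVec, smul_mulVec, vecMulVec_mulVec,
    dotProduct_single_sub_single, op_smul_eq_smul, smul_smul]

theorem avgMatrix_mulVec_apply (y : Fin n → ℝ) (j : Fin n) :
    (avgMatrix u v *ᵥ y) j = if j = u ∨ j = v then (y u + y v) / 2 else y j := by
  simp only [avgMatrix_mulVec, Pi.sub_apply, Pi.smul_apply, Pi.single_apply, smul_eq_mul]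
  split_ifs <;> subst_vars <;> simp_all <;> ring

theorem dotProduct_avgMatrix_mulVec (chi y : Fin n → ℝ) :
    chi ⬝ᵥ (avgMatrix u v *ᵥ y) = chi ⬝ᵥ y - 2⁻¹ * (chi u - chi v) * (y u - y v) := by
  rw [avgMatrix_mulVec, dotProduct_sub, dotProduct_smul, dotProduct_comm chi (_ - _),
    dotProduct_single_sub_single, smul_eq_mul]
  ring

variable {u v}

theorem abs_avgMatrix_mulVec_apply_le {y : Fin n → ℝ} {r : ℝ} (hy : ∀ j, |y j| ≤ r) (j : Fin n) :
    |(avgMatrix u v *ᵥ y) j| ≤ r := by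
  rw [avgMatrix_mulVec_apply]
  split_ifs
  · rw [abs_div, abs_two, div_le_iff₀ two_pos]
    linarith [abs_add_le (y u) (y v), hy u, hy v]
  · exact hy j

theorem dotProduct_avgMatrix_mulVec_of_eq (chi y : Fin n → ℝ) (h : chi u = chi v) :
    chi ⬝ᵥ (avgMatrix u v *ᵥ y) = chi ⬝ᵥ y := by
  simp [dotProduct_avgMatrix_mulVec, h]

theorem dotProduct_sub_two_le_dotProduct_avgMatrix_mulVec {chi y : Fin n → ℝ}
    (hchi : ∀ j, |chi j| ≤ 1) (hy : ∀ j, |y j| ≤ 1) :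
    chi ⬝ᵥ y - 2 ≤ chi ⬝ᵥ (avgMatrix u v *ᵥ y) := by
  have hchi_uv : |chi u - chi v| ≤ 2 := by linarith [abs_sub (chi u) (chi v), hchi u, hchi v]
  have hy_uv : |y u - y v| ≤ 2 := by linarith [abs_sub (y u) (y v), hy u, hy v]
  have hprod : |(chi u - chi v) * (y u - y v)| ≤ 2 * 2 := by
    rw [abs_mul]; exact mul_le_mul hchi_uv hy_uv (abs_nonneg _) zero_le_two
  rw [dotProduct_avgMatrix_mulVec, mul_assoc]
  linarith [le_abs_self ((chi u - chi v) * (y u - y v))]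

end avgMatrix

theorem sum_sq_sub_le_two_mul_dotProduct_sub {n : ℕ} {chi y : Fin n → ℝ}
    (hy : ∀ j, |y j| ≤ |chi j|) :
    ∑ j, (y j - chi j) ^ 2 ≤ 2 * (chi ⬝ᵥ chi - chi ⬝ᵥ y) := by
  rw [dotProduct, dotProduct, ← sum_sub_distrib, mul_sum]
  refine sum_le_sum fun j _ => ?_
  nlinarith [sq_le_sq.mpr (hy j)]

def IsAvgTrajectory {n t : ℕ} (e : Fin t → Fin n × Fin n) (x : ℕ → Fin n → ℝ) : Prop :=
  ∀ i : Fin t, x (i + 1) = avgMatrix (e i).1 (e i).2 *ᵥ x i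

namespace IsAvgTrajectory

variable {n t : ℕ} {x : ℕ → Fin n → ℝ}

theorem castSucc {e : Fin (t + 1) → Fin n × Fin n} (h : IsAvgTrajectory e x) :
    IsAvgTrajectory (fun i => e i.castSucc) x :=
  fun i => h i.castSucc

theorem succ_eq {e : Fin (t + 1) → Fin n × Fin n} (h : IsAvgTrajectory e x) :
    x (t + 1) = avgMatrix (e (Fin.last t)).1 (e (Fin.last t)).2 *ᵥ x t :=
  h (Fin.last t)

theorem abs_apply_le {e : Fin t → Fin n × Fin n} (h : IsAvgTrajectory e x) {r : ℝ}
    (h0 : ∀ j, |x 0 j| ≤ r) (j : Fin n) : |x t j| ≤ r := by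
  induction t generalizing j with
  | zero => exact h0 j
  | succ t ih => rw [h.succ_eq]; exact abs_avgMatrix_mulVec_apply_le (ih h.castSucc) j

theorem sub_two_mul_card_le_dotProduct {e : Fin t → Fin n × Fin n} (h : IsAvgTrajectory e x) {chi : Fin n → ℝ}
    (hchi : ∀ j, |chi j| ≤ 1) (h0 : ∀ j, |x 0 j| ≤ 1) :
    chi ⬝ᵥ x 0 - 2 * #{i | chi (e i).1 ≠ chi (e i).2} ≤ chi ⬝ᵥ x t := by
  induction t with
  | zero => simp
  | succ t ih =>
    have ih := ih h.castSucc
    rw [natCast_card_filter] at ih ⊢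
    rw [Fin.sum_univ_castSucc, h.succ_eq]
    by_cases hcross : chi (e (Fin.last t)).1 = chi (e (Fin.last t)).2
    · rw [dotProduct_avgMatrix_mulVec_of_eq _ _ hcross]
      simpa [hcross] using ih
    · have := dotProduct_sub_two_le_dotProduct_avgMatrix_mulVec (u := (e (Fin.last t)).1)
        (v := (e (Fin.last t)).2) hchi (h.castSucc.abs_apply_le h0)
      simp only [hcross, ne_eq, not_false_eq_true, if_true]
      linarith

end IsAvgTrajectory

/-- If `χ ∈ {−1,+1}ⁿ` and `x⁽ᵗ⁾` is obtained from `χ` by `t` averaging steps along edges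
`e 0, …, e (t−1)`, of which exactly `c` are cross edges (`χ(u) ≠ χ(v)`), then
`‖Wₜ⋯W₁χ − χ‖² ≤ 4c`. -/
theorem stmt_11 {n t : ℕ} (chi : Fin n → ℝ) (hchi : ∀ j, chi j = 1 ∨ chi j = -1)
    (e : Fin t → Fin n × Fin n)
    (c : ℕ) (hc : c = (Finset.univ.filter (fun i : Fin t => chi (e i).1 ≠ chi (e i).2)).card)
    (x : ℕ → Fin n → ℝ) (hx0 : x 0 = chi)
    (hxs : ∀ i : Fin t, x (i + 1) = (avgMatrix (e i).1 (e i).2).mulVec (x i)) :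
    ∑ j, (x t j - chi j) ^ 2 ≤ 4 * c := by
  have habs : ∀ j, |chi j| = 1 := fun j => by rcases hchi j with h | h <;> simp [h]
  have hx0_le : ∀ j, |x 0 j| ≤ 1 := fun j => by rw [hx0]; exact (habs j).le
  have hbound : ∀ j, |x t j| ≤ |chi j| := fun j => by
    rw [habs]; exact IsAvgTrajectory.abs_apply_le hxs hx0_le j
  have hdot := IsAvgTrajectory.sub_two_mul_card_le_dotProduct hxs (fun j => (habs j).le) hx0_le
  rw [hx0, ← hc] at hdot
  linarith [sum_sq_sub_le_two_mul_dotProduct_sub hbound]
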